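/- arXiv:1403.0355 — 2 statements merged into one kernel-verified Lean document; each statement's English description precedes it below -/
import Mathlib

section
/- Let K ≥ 1, σ² > 0, and fix nonnegative h_i > 0 and P_j ≥ 0 for j ≠ n. Define f(P_n) = ln(1 + h_nP_n/(σ² + ∑_{j≠n} h_jP_j)) + ∑_{i≠n} ln(1 + h_iP_i/(σ² + ∑_{j≠i} h_jP_j)), viewed as a function of P_n ≥ 0 (with P_n appearing also in the denominators of the terms i ≠ n). Then the derivative of f with respect to P_n equals (h_n/(σ² + ∑_{j=1}^K h_jP_j)) · (1 − ∑_{i≠n} h_iP_i/(σ² + ∑_{j≠i} h_jP_j)). -/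
/-!
Differentiating `log (1 + N / D)` gives `(N' D - N D') / (D (D + N))`, and for every user `i` the
denominator `D + N` is the same total received power `T = σ² + ∑ⱼ hⱼ Pⱼ`. User `n`'s own term has
`N' = hₙ`, `D' = 0` and contributes `hₙ / T`; every other user `i` has `N' = 0`, `D' = hₙ` and
contributes `-(hₙ / T) · SINRᵢ`.
-/

open Finset Function

theorem HasDerivAt.log_one_add_div {f g : ℝ → ℝ} {f' g' x : ℝ}
    (hf : HasDerivAt f f' x) (hg : HasDerivAt g g' x) (hgx : g x ≠ 0) (hfg : g x + f x ≠ 0) :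
    HasDerivAt (fun y => Real.log (1 + f y / g y))
      ((f' * g x - f x * g') / (g x * (g x + f x))) x := by
  have hpos : 1 + f x / g x ≠ 0 := by
    rw [one_add_div hgx]; exact div_ne_zero hfg hgx
  refine (((hf.div hg hgx).const_add 1).log hpos).congr_deriv ?_
  rw [Pi.div_apply]
  field_simp

section UpdateDeriv

variable {𝕜 ι : Type*} [NontriviallyNormedField 𝕜] [DecidableEq ι]

theorem hasDerivAt_update_apply (P : ι → 𝕜) (n j : ι) (x : 𝕜) :
    HasDerivAt (fun y => update P n y j) (if j = n then 1 else 0) x := by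
  simpa [Pi.single_apply] using hasDerivAt_pi.1 (hasDerivAt_update P n x) j

theorem hasDerivAt_sum_mul_update (h P : ι → 𝕜) (n : ι) (s : Finset ι) (x : 𝕜) :
    HasDerivAt (fun y => ∑ j ∈ s, h j * update P n y j) (if n ∈ s then h n else 0) x := by
  simpa [mul_ite, sum_ite_eq'] using
    HasDerivAt.fun_sum fun j _ => (hasDerivAt_update_apply P n j x).const_mul (h j)

end UpdateDeriv

namespace SumRate

variable {ι : Type*} [Fintype ι]

noncomputable def totalPower (σ2 : ℝ) (h Q : ι → ℝ) : ℝ :=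
  σ2 + ∑ j, h j * Q j

theorem totalPower_pos {σ2 : ℝ} {h Q : ι → ℝ} (hσ : 0 < σ2) (hh : 0 ≤ h) (hQ : 0 ≤ Q) :
    0 < totalPower σ2 h Q :=
  add_pos_of_pos_of_nonneg hσ <| sum_nonneg fun j _ => mul_nonneg (hh j) (hQ j)

variable [DecidableEq ι]

noncomputable def interference (σ2 : ℝ) (h Q : ι → ℝ) (i : ι) : ℝ :=
  σ2 + ∑ j ∈ univ.erase i, h j * Q j

noncomputable def sinr (σ2 : ℝ) (h Q : ι → ℝ) (i : ι) : ℝ :=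
  h i * Q i / interference σ2 h Q i

theorem interference_add (σ2 : ℝ) (h Q : ι → ℝ) (i : ι) :
    interference σ2 h Q i + h i * Q i = totalPower σ2 h Q := by
  rw [interference, totalPower, add_assoc, sum_erase_add _ _ (mem_univ i)]

theorem interference_pos {σ2 : ℝ} {h Q : ι → ℝ} (hσ : 0 < σ2) (hh : 0 ≤ h) (hQ : 0 ≤ Q)
    (i : ι) : 0 < interference σ2 h Q i :=
  add_pos_of_pos_of_nonneg hσ <| sum_nonneg fun j _ => mul_nonneg (hh j) (hQ j)

theorem hasDerivAt_log_one_add_sinr_update {σ2 : ℝ} {h P : ι → ℝ} {n : ι} {x : ℝ} (i : ι)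
    (hD : interference σ2 h (update P n x) i ≠ 0)
    (hT : totalPower σ2 h (update P n x) ≠ 0) :
    HasDerivAt (fun y => Real.log (1 + sinr σ2 h (update P n y) i))
      (h n / totalPower σ2 h (update P n x) *
        if i = n then 1 else -sinr σ2 h (update P n x) i) x := by
  have hN := (hasDerivAt_update_apply P n i x).const_mul (h i)
  have hI : HasDerivAt (fun y => interference σ2 h (update P n y) i)
      (if n ∈ univ.erase i then h n else 0) x :=
    (hasDerivAt_sum_mul_update h P n (univ.erase i) x).const_add σ2
  have hlog := hN.log_one_add_div hI hD (by rwa [interference_add])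
  rw [interference_add] at hlog
  refine hlog.congr_deriv ?_
  rcases eq_or_ne i n with rfl | hin
  · simp only [↓reduceIte, mul_one, update_self, mem_erase, ne_eq, not_true_eq_false, mem_univ,
      and_true, mul_zero, sub_zero]
    field_simp
  · simp only [hin, hin.symm, ↓reduceIte, ne_eq, not_false_eq_true, update_of_ne, mem_erase,
      mem_univ, and_self, mul_zero, zero_mul, zero_sub, sinr, mul_neg]
    field_simp

end SumRate

open SumRate in
theorem sum_rate_deriv_general (K : ℕ) (σ2 : ℝ) (hσ : 0 < σ2)
    (n : Fin K) (h : Fin K → ℝ) (hh : ∀ i, 0 < h i)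
    (P : Fin K → ℝ) (hP : ∀ j, j ≠ n → 0 ≤ P j) (x : ℝ) (hx : 0 ≤ x) :
    HasDerivAt
      (fun y : ℝ => ∑ i, Real.log (1 +
        h i * Function.update P n y i /
          (σ2 + ∑ j ∈ Finset.univ.erase i, h j * Function.update P n y j)))
      (h n / (σ2 + ∑ j, h j * Function.update P n x j) *
        (1 - ∑ i ∈ Finset.univ.erase n,
          h i * Function.update P n x i /
            (σ2 + ∑ j ∈ Finset.univ.erase i, h j * Function.update P n x j)))
      x := by
  have hQ : 0 ≤ update P n x := le_update_iff.2 ⟨hx, hP⟩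
  have hh' : 0 ≤ h := fun i => (hh i).le
  have hsum := HasDerivAt.fun_sum fun i (_ : i ∈ univ) =>
    hasDerivAt_log_one_add_sinr_update (P := P) (n := n) (x := x) i
      (interference_pos hσ hh' hQ i).ne' (totalPower_pos hσ hh' hQ).ne'
  rw [← mul_sum, ← add_sum_erase _ _ (mem_univ n), if_pos rfl,
    sum_congr rfl fun i hi => if_neg (ne_of_mem_erase hi), sum_neg_distrib, ← sub_eq_add_neg]
    at hsum
  exact hsum

theorem sum_rate_deriv (K : ℕ) (hK : 1 ≤ K) (σ2 : ℝ) (hσ : 0 < σ2)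
    (n : Fin K) (h : Fin K → ℝ) (hh : ∀ i, 0 < h i)
    (P : Fin K → ℝ) (hP : ∀ j, j ≠ n → 0 ≤ P j) (x : ℝ) (hx : 0 ≤ x) :
    HasDerivAt
      (fun y : ℝ => ∑ i, Real.log (1 +
        h i * Function.update P n y i /
          (σ2 + ∑ j ∈ Finset.univ.erase i, h j * Function.update P n y j)))
      (h n / (σ2 + ∑ j, h j * Function.update P n x j) *
        (1 - ∑ i ∈ Finset.univ.erase n,
          h i * Function.update P n x i /
            (σ2 + ∑ j ∈ Finset.univ.erase i, h j * Function.update P n x j)))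
      x :=
  sum_rate_deriv_general K σ2 hσ n h hh P hP x hx
end

section
/- Let σ² > 0 and suppose a ≥ σ²(e − 1) (equivalently ln(1 + a/σ²) ≥ 1). Then for all b with 0 ≤ b ≤ a, single-user transmission beats sharing: ln(1 + a/σ²) ≥ ln(1 + a/(σ² + b)) + ln(1 + b/(σ² + a)). -/
/-!
After clearing denominators, the single-user rate minus the sharing sum-rate has the sign of
`(σ² + a)² (σ² + b) - σ² (σ² + a + b)² = b (a² - σ² (σ² + b))`. For `b ≤ a` this is nonnegative as
soon as `a² ≥ σ² (σ² + a)`, i.e. `a ≥ φ σ²` with `φ` the golden ratio, and `φ < e - 1`.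
-/

open Real
open scoped goldenRatio

theorem log_one_add_div_add_log_one_add_div_le {σ2 a b : ℝ} (hσ : 0 < σ2) (ha : 0 ≤ a)
    (hb : 0 ≤ b) (hab : σ2 * (σ2 + b) ≤ a ^ 2) :
    log (1 + a / (σ2 + b)) + log (1 + b / (σ2 + a)) ≤ log (1 + a / σ2) := by
  have hσa : σ2 + a ≠ 0 := by positivity
  have hσb : σ2 + b ≠ 0 := by positivity
  rw [← log_mul (by positivity) (by positivity)]
  refine log_le_log (by positivity) ?_
  rw [one_add_div hσb, one_add_div hσa, one_add_div hσ.ne', div_mul_div_comm,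
    div_le_div_iff₀ (by positivity) hσ]
  linear_combination mul_le_mul_of_nonneg_left hab hb

theorem mul_add_le_sq_of_goldenRatio_mul_le {σ2 a : ℝ} (hσ : 0 ≤ σ2) (ha : σ2 * φ ≤ a) :
    σ2 * (σ2 + a) ≤ a ^ 2 := by
  have hfactor : a ^ 2 - σ2 * (σ2 + a) = (a - σ2 * φ) * (a - σ2 * ψ) := by
    linear_combination σ2 * a * goldenRatio_add_goldenConj - σ2 ^ 2 * goldenRatio_mul_goldenConj
  have hψφ : σ2 * ψ ≤ σ2 * φ := by
    gcongr; exact goldenConj_neg.le.trans goldenRatio_pos.le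
  linarith [mul_nonneg (sub_nonneg.2 ha) (sub_nonneg.2 (hψφ.trans ha))]

theorem goldenRatio_lt_exp_one_sub_one : φ < exp 1 - 1 := by
  nlinarith [exp_one_gt_d9, goldenRatio_sq, goldenRatio_pos]

theorem single_user_beats_sharing (σ2 a b : ℝ) (hσ : 0 < σ2)
    (ha : σ2 * (Real.exp 1 - 1) ≤ a) (hb0 : 0 ≤ b) (hba : b ≤ a) :
    Real.log (1 + a / (σ2 + b)) + Real.log (1 + b / (σ2 + a)) ≤ Real.log (1 + a / σ2) := by
  have hφ : σ2 * φ ≤ a := le_trans (by gcongr; exact goldenRatio_lt_exp_one_sub_one.le) ha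
  refine log_one_add_div_add_log_one_add_div_le hσ (hb0.trans hba) hb0 ?_
  calc σ2 * (σ2 + b) ≤ σ2 * (σ2 + a) := by gcongr
    _ ≤ a ^ 2 := mul_add_le_sq_of_goldenRatio_mul_le hσ.le hφ
end
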